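/- Let C = (C_1,...,C_r) be a perfect coloring of H(n,q) with parameter matrix S whose matrix of eigenvectors T diagonalizes S, let α ∈ F_q^n and I ⊆ {1,...,n} with complement Ī. Define the row vector of local weight enumerators g^{I,α}_C(x,y) = (g^{I,α}_{C_1}(x,y),...,g^{I,α}_{C_r}(x,y)) where g^{I,α}_{C_i}(x,y) = ∑_{j=0}^{|I|} |C_i ∩ W_j(α) ∩ Γ_I(α)| y^j x^{|I|-j}. Then with h(S) = ((q-1)nE - S)/q (a matrix with integer eigenvalues), x' = x+(q-2)y, y' = -y, one has g^{Ī,α}_C(x,y) · (x+(q-1)y)^{h(S) - |Ī|E} = g^{I,α}_C(x',y') · (x'+(q-1)y')^{h(S) - |I|E}, where matrix powers t^{h(S)-kE} are defined via the diagonalization t^{h(S)-kE} = T diag(t^{h_i - k}) T^{-1} with h_i = ((q-1)n - μ_i)/q for the eigenvalues μ_i of S. -/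

import Mathlib

open Finset Matrix

noncomputable def xiq (q : ℕ) : ℂ := Complex.exp (2 * Real.pi * Complex.I / q)

/-- The character `φ^β(α) = ξ^{⟨α,β⟩}` on the q-ary Hamming space. -/
noncomputable def chr (q n : ℕ) [NeZero q] (β α : Fin n → ZMod q) : ℂ :=
  xiq q ^ (∑ i, α i * β i : ZMod q).val

/-- Fourier transform `f̂(α) = ∑_β f(β) conj(ξ^{⟨α,β⟩})`. -/
noncomputable def ftr (q n : ℕ) [NeZero q] (f : (Fin n → ZMod q) → ℂ)
    (α : Fin n → ZMod q) : ℂ :=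
  ∑ β : Fin n → ZMod q, f β * (starRingEnd ℂ) (chr q n β α)

/-- The face `Γ_I(α)` of the hypercube. -/
def face (q n : ℕ) [NeZero q] (I : Finset (Fin n)) (α : Fin n → ZMod q) :
    Finset (Fin n → ZMod q) :=
  Finset.univ.filter (fun β => ∀ i ∉ I, β i = α i)

/-- The support `s(β)` of a vertex. -/
def supp (q n : ℕ) [NeZero q] (β : Fin n → ZMod q) : Finset (Fin n) :=
  Finset.univ.filter (fun i => β i ≠ 0)

/-- Local weight enumerator `g^{I,α}_f(x,y)`. -/
noncomputable def lwe (q n : ℕ) [NeZero q] (f : (Fin n → ZMod q) → ℂ)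
    (I : Finset (Fin n)) (α : Fin n → ZMod q) (x y : ℂ) : ℂ :=
  ∑ β ∈ face q n I α, f β * y ^ hammingDist β α * x ^ (I.card - hammingDist β α)

/-- `f` is an eigenfunction of the Hamming graph `H(n,q)` with eigenvalue `μ`. -/
def IsEigenfun (q n : ℕ) [NeZero q] (f : (Fin n → ZMod q) → ℂ) (μ : ℂ) : Prop :=
  ∀ α, ∑ β ∈ Finset.univ.filter (fun β => hammingDist α β = 1), f β = μ * f α

/-- Adjacency matrix of the Hamming graph `H(n,q)`. -/
noncomputable def adjM (q n : ℕ) [NeZero q] :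
    Matrix (Fin n → ZMod q) (Fin n → ZMod q) ℂ :=
  fun α β => if hammingDist α β = 1 then 1 else 0

/-- Vertex-color incidence matrix of a coloring `c`. -/
noncomputable def colM (q n r : ℕ) [NeZero q] (c : (Fin n → ZMod q) → Fin r) :
    Matrix (Fin n → ZMod q) (Fin r) ℂ :=
  fun α i => if c α = i then 1 else 0

/-!
Expand a function on `F_q^n` in the characters `φ^β`. Summing over a neighbourhood shows that
`φ^β` is an eigenfunction of `H(n,q)` with eigenvalue `(q-1)n - q·wt(β)`, so an eigenfunction
with eigenvalue `(q-1)n - qh` has Fourier support on the vectors of weight `h`. On a face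
`Γ_I(α)` the local weight enumerator of `φ^β` factors over the coordinates of `I`, giving
`φ^β(α) (x+(q-1)y)^a (x-y)^b` with `a`, `b` the numbers of zero and nonzero entries of `β` in
`I`; for `wt(β) = h` both sides of the identity are then the same monomial. For a perfect
coloring with `S T = T M`, the columns of `C T` (`C` the incidence matrix) are eigenfunctions
with eigenvalues `μ_j`, and multiplying the row of enumerators by `T` diagonalises `t^{h(S)}`.
-/

namespace AddChar

lemma map_sum_eq_prod {ι A M : Type*} [AddCommMonoid A] [CommMonoid M] (ψ : AddChar A M)
    (s : Finset ι) (f : ι → A) : ψ (∑ i ∈ s, f i) = ∏ i ∈ s, ψ (f i) := by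
  classical
  induction s using Finset.induction_on with
  | empty => simp
  | insert a s ha ih => rw [sum_insert ha, prod_insert ha, map_add_eq_mul, ih]

end AddChar

lemma hammingDist_update_self {ι β : Type*} [Fintype ι] [DecidableEq ι] [DecidableEq β]
    (α : ι → β) (i : ι) {a : β} (ha : a ≠ α i) :
    hammingDist α (Function.update α i a) = 1 := by
  rw [hammingDist, card_eq_one]
  refine ⟨i, eq_singleton_iff_unique_mem.2 ⟨by simpa using ha.symm, fun j hj => ?_⟩⟩
  by_contra hji
  simp [Function.update_of_ne hji] at hj

lemma sum_hammingDist_eq_one {ι β M : Type*} [Fintype ι] [DecidableEq ι] [Fintype β]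
    [DecidableEq β] [AddCommMonoid M] (α : ι → β) (F : (ι → β) → M) :
    ∑ γ ∈ univ.filter (fun γ => hammingDist α γ = 1), F γ
      = ∑ i, ∑ a ∈ univ.erase (α i), F (Function.update α i a) := by
  rw [sum_sigma']
  symm
  refine sum_bij (fun p _ => Function.update α p.1 p.2) ?_ ?_ ?_ (fun _ _ => rfl)
  · rintro ⟨i, a⟩ h
    simp only [mem_sigma, mem_erase] at h
    simpa using hammingDist_update_self α i h.2.1
  · rintro ⟨i, a⟩ hia ⟨j, b⟩ hjb h
    simp only [mem_sigma, mem_erase] at hia hjb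
    have hij : i = j := by
      by_contra hij
      have := congrFun h i
      rw [Function.update_self, Function.update_of_ne hij] at this
      exact hia.2.1 this
    subst hij
    simpa using congrFun h i
  · intro γ hγ
    obtain ⟨i, hi⟩ := card_eq_one.1 (mem_filter.1 hγ).2
    have hdiff : ∀ j, α j ≠ γ j ↔ j = i := fun j => by
      simpa using congrArg (j ∈ ·) hi
    refine ⟨⟨i, γ i⟩, by simpa using fun h => (hdiff i).2 rfl h.symm, ?_⟩
    funext j
    by_cases hj : j = i
    · subst hj; simp
    · rw [Function.update_of_ne hj]
      by_contra h
      exact hj ((hdiff j).1 h)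

section

variable {q n : ℕ} [NeZero q]

local notation "ψ" => ZMod.stdAddChar (N := q)

lemma xiq_pow_val (v : ZMod q) : xiq q ^ v.val = ψ v := by
  rw [ZMod.stdAddChar_apply, ZMod.toCircle_apply, xiq, ← Complex.exp_nat_mul]
  congr 1
  ring

lemma chr_eq_prod (β α : Fin n → ZMod q) : chr q n β α = ∏ i, ψ (α i * β i) := by
  rw [chr, xiq_pow_val, AddChar.map_sum_eq_prod]

lemma chr_comm (β α : Fin n → ZMod q) : chr q n β α = chr q n α β := by
  simp only [chr_eq_prod, mul_comm]

lemma sum_stdAddChar_mul (b : ZMod q) :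
    ∑ a : ZMod q, ψ (a * b) = if b = 0 then (q : ℂ) else 0 := by
  rw [AddChar.sum_mulShift b (ZMod.isPrimitive_stdAddChar q), ZMod.card, Nat.cast_ite,
    Nat.cast_zero]

lemma conj_stdAddChar (a : ZMod q) : starRingEnd ℂ (ψ a) = ψ (-a) := by
  rw [AddChar.starComp_apply (by simp [ZMod.ringChar_zmod_n, Nat.pos_of_neZero]),
    AddChar.inv_apply]

lemma sum_chr_mul_conj_chr (α γ : Fin n → ZMod q) :
    ∑ β, chr q n β α * starRingEnd ℂ (chr q n β γ)
      = if α = γ then (q : ℂ) ^ n else 0 := by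
  have hterm : ∀ β : Fin n → ZMod q, chr q n β α * starRingEnd ℂ (chr q n β γ)
      = ∏ i, ψ (β i * (α i - γ i)) := fun β => by
    simp only [chr_eq_prod, map_prod, conj_stdAddChar, ← prod_mul_distrib,
      ← AddChar.map_add_eq_mul]
    exact prod_congr rfl fun i _ => by ring_nf
  rw [Fintype.sum_congr _ _ hterm,
    ← Fintype.prod_sum (fun i (a : ZMod q) => ψ (a * (α i - γ i)))]
  simp only [sum_stdAddChar_mul, sub_eq_zero]
  split_ifs with h
  · simp [h]
  · obtain ⟨i, hi⟩ := Function.ne_iff.1 h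
    exact prod_eq_zero (mem_univ i) (if_neg hi)

theorem sum_ftr_mul_chr (f : (Fin n → ZMod q) → ℂ) (α : Fin n → ZMod q) :
    ∑ β, ftr q n f β * chr q n β α = (q : ℂ) ^ n * f α := by
  simp only [ftr, sum_mul]
  rw [sum_comm]
  have hγ : ∀ γ, ∑ β, f γ * starRingEnd ℂ (chr q n γ β) * chr q n β α
      = f γ * if α = γ then (q : ℂ) ^ n else 0 := fun γ => by
    rw [← sum_chr_mul_conj_chr, mul_sum]
    exact sum_congr rfl fun β _ => by rw [chr_comm γ β, chr_comm β α]; ring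
  simp only [hγ, mul_ite, mul_zero, sum_ite_eq, mem_univ, if_true]
  exact mul_comm _ _

lemma chr_update (β α : Fin n → ZMod q) (i : Fin n) (a : ZMod q) :
    chr q n β (Function.update α i a) = ψ ((a - α i) * β i) * chr q n β α := by
  have hupd : Function.update α i a = α + Pi.single i (a - α i) := by
    ext j
    by_cases hj : j = i
    · subst hj; simp
    · simp [hj]
  rw [hupd, chr_eq_prod, chr_eq_prod]
  simp only [Pi.add_apply, add_mul, AddChar.map_add_eq_mul, prod_mul_distrib]
  rw [mul_comm]
  congr 1
  refine (Fintype.prod_eq_single i fun j hj => ?_).trans (by rw [Pi.single_eq_same])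
  rw [Pi.single_eq_of_ne hj, zero_mul, AddChar.map_zero_eq_one]

lemma sum_erase_stdAddChar_sub_mul (c b : ZMod q) :
    ∑ a ∈ univ.erase c, ψ ((a - c) * b) = (if b = 0 then (q : ℂ) else 0) - 1 := by
  rw [sum_erase_eq_sub (mem_univ c), sub_self, zero_mul, AddChar.map_zero_eq_one,
    ← sum_stdAddChar_mul]
  exact congrArg (· - 1) (Fintype.sum_equiv (Equiv.subRight c) _ _ fun _ => rfl)

lemma isEigenfun_chr (β : Fin n → ZMod q) :
    IsEigenfun q n (chr q n β) (((q : ℂ) - 1) * n - (q : ℂ) * ((supp q n β).card : ℕ)) := by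
  intro α
  have hcount : ∑ i : Fin n, ((if β i = 0 then (q : ℂ) else 0) - 1)
      = ((q : ℂ) - 1) * n - (q : ℂ) * ((supp q n β).card : ℕ) := by
    have hzeros : ((univ.filter fun i => β i = 0).card : ℂ) = n - (supp q n β).card := by
      rw [eq_sub_iff_add_eq]
      exact_mod_cast (card_filter_add_card_filter_not (s := univ) (fun i => β i = 0)).trans
        (card_fin n)
    rw [sum_sub_distrib, sum_ite, sum_const_zero, add_zero, sum_const, sum_const, card_univ,
      Fintype.card_fin, nsmul_eq_mul, nsmul_eq_mul, mul_one, hzeros]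
    ring
  simp only [sum_hammingDist_eq_one, chr_update, ← sum_mul, sum_erase_stdAddChar_sub_mul,
    ← hcount]

lemma IsEigenfun.ftr_eq_zero {f : (Fin n → ZMod q) → ℂ} {μ : ℂ} (hf : IsEigenfun q n f μ)
    {β : Fin n → ZMod q}
    (hμ : μ ≠ ((q : ℂ) - 1) * n - (q : ℂ) * ((supp q n β).card : ℕ)) :
    ftr q n f β = 0 := by
  set lam : ℂ := ((q : ℂ) - 1) * n - (q : ℂ) * ((supp q n β).card : ℕ)
  have hlam : starRingEnd ℂ lam = lam := by simp [lam]
  have heig : IsEigenfun q n (chr q n β) lam := isEigenfun_chr β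
  have hconj : ∀ γ, ∑ α ∈ univ.filter (fun α => hammingDist γ α = 1),
      starRingEnd ℂ (chr q n α β) = lam * starRingEnd ℂ (chr q n γ β) := fun γ => by
    simp only [chr_comm _ β, ← map_sum, heig γ, map_mul, hlam]
  have key : μ * ftr q n f β = lam * ftr q n f β :=
    calc μ * ftr q n f β
        = ∑ α, (∑ γ ∈ univ.filter (fun γ => hammingDist α γ = 1), f γ)
            * starRingEnd ℂ (chr q n α β) := by
          rw [ftr, mul_sum]
          exact sum_congr rfl fun α _ => by rw [hf α, mul_assoc]
      _ = ∑ γ, f γ * ∑ α ∈ univ.filter (fun α => hammingDist γ α = 1),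
            starRingEnd ℂ (chr q n α β) := by
          simp only [sum_filter, ite_mul, zero_mul, mul_ite, mul_zero, sum_mul, mul_sum]
          rw [sum_comm]
          simp only [hammingDist_comm]
      _ = lam * ftr q n f β := by
          simp only [hconj, ftr, mul_sum]
          exact sum_congr rfl fun γ _ => by ring
  have hzero : (μ - lam) * ftr q n f β = 0 := by linear_combination key
  exact (mul_eq_zero.1 hzero).resolve_left (sub_ne_zero.2 hμ)

lemma face_eq_piFinset (I : Finset (Fin n)) (α : Fin n → ZMod q) :
    face q n I α = Fintype.piFinset fun i => if i ∈ I then univ else {α i} := by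
  ext γ
  simp only [face, mem_filter, mem_univ, true_and, Fintype.mem_piFinset]
  refine forall_congr' fun i => ?_
  by_cases hi : i ∈ I <;> simp [hi]

lemma pow_hammingDist_mul_pow_eq_prod {I : Finset (Fin n)} {α γ : Fin n → ZMod q}
    (hγ : γ ∈ face q n I α) (x y : ℂ) :
    y ^ hammingDist γ α * x ^ (I.card - hammingDist γ α)
      = ∏ i ∈ I, if γ i = α i then x else y := by
  have hdist : hammingDist γ α = (I.filter fun i => γ i ≠ α i).card := by
    refine congrArg card (ext fun i => ?_)
    simp only [face, mem_filter, mem_univ, true_and] at hγ ⊢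
    exact ⟨fun h => ⟨not_imp_comm.1 (hγ i) h, h⟩, And.right⟩
  have hsplit := card_filter_add_card_filter_not (s := I) fun i => γ i = α i
  rw [prod_ite, prod_const, prod_const, hdist, mul_comm]
  simp only [ne_eq]
  congr 2
  omega

lemma lwe_of_eq_prod {f : (Fin n → ZMod q) → ℂ} (φ : Fin n → ZMod q → ℂ)
    (hf : ∀ γ, f γ = ∏ i, φ i (γ i)) (I : Finset (Fin n)) (α : Fin n → ZMod q)
    (x y : ℂ) : lwe q n f I α x y = (∏ i ∈ Iᶜ, φ i (α i))
      * ∏ i ∈ I, (x * φ i (α i) + y * ∑ a ∈ univ.erase (α i), φ i a) := by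
  have hterm : ∀ γ ∈ face q n I α, f γ * y ^ hammingDist γ α
        * x ^ (I.card - hammingDist γ α)
      = ∏ i, φ i (γ i) * if i ∈ I then (if γ i = α i then x else y) else 1 :=
    fun γ hγ => by
    rw [hf, mul_assoc, pow_hammingDist_mul_pow_eq_prod hγ, prod_mul_distrib, Fintype.prod_ite_mem]
  rw [lwe, sum_congr rfl hterm, face_eq_piFinset, ← prod_univ_sum (fun i => _)
    (fun i a => φ i a * if i ∈ I then (if a = α i then x else y) else 1),
    ← prod_mul_prod_compl I, mul_comm]
  congr 1
  · exact prod_congr rfl fun i hi => by simp [mem_compl.1 hi]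
  refine prod_congr rfl fun i hi => ?_
  simp only [hi, if_true, mul_ite]
  rw [← add_sum_erase _ _ (mem_univ (α i)), if_pos rfl, mul_sum]
  congr 1
  · ring
  · exact sum_congr rfl fun a ha => by rw [if_neg (ne_of_mem_erase ha), mul_comm]

lemma mul_stdAddChar_add_sum_erase (c b : ZMod q) (x y : ℂ) :
    x * ψ (c * b) + y * ∑ a ∈ univ.erase c, ψ (a * b)
      = ψ (c * b) * if b = 0 then x + ((q : ℂ) - 1) * y else x - y := by
  have hshift : ∀ a, ψ (a * b) = ψ (c * b) * ψ ((a - c) * b) := fun a => by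
    rw [← AddChar.map_add_eq_mul]
    ring_nf
  rw [sum_congr rfl fun a _ => hshift a, ← mul_sum, sum_erase_stdAddChar_sub_mul]
  split_ifs <;> ring

lemma lwe_chr (β : Fin n → ZMod q) (I : Finset (Fin n)) (α : Fin n → ZMod q) (x y : ℂ) :
    lwe q n (chr q n β) I α x y
      = chr q n β α * (x + ((q : ℂ) - 1) * y) ^ (I.filter fun i => β i = 0).card
        * (x - y) ^ (I.filter fun i => β i ≠ 0).card := by
  rw [lwe_of_eq_prod (fun i a => ψ (a * β i)) (chr_eq_prod β)]
  simp only [mul_stdAddChar_add_sum_erase]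
  rw [prod_mul_distrib, ← mul_assoc, prod_compl_mul_prod, ← chr_eq_prod, prod_ite, prod_const,
    prod_const, mul_assoc]

lemma pow_mul_lwe_eq_sum_ftr_mul (f : (Fin n → ZMod q) → ℂ) (I : Finset (Fin n))
    (α : Fin n → ZMod q) (x y : ℂ) :
    (q : ℂ) ^ n * lwe q n f I α x y = ∑ β, ftr q n f β * lwe q n (chr q n β) I α x y := by
  simp only [lwe, mul_sum]
  rw [sum_comm]
  refine sum_congr rfl fun γ _ => ?_
  rw [← mul_assoc, ← mul_assoc, ← sum_ftr_mul_chr, sum_mul, sum_mul]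
  simp only [mul_assoc]

lemma lwe_chr_duality {β : Fin n → ZMod q} {h : ℕ} (hβ : (supp q n β).card = h)
    (α : Fin n → ZMod q) (I : Finset (Fin n)) (x y : ℂ) :
    (x - y) ^ I.card * lwe q n (chr q n β) Iᶜ α x y * (x + ((q : ℂ) - 1) * y) ^ h
      = (x + ((q : ℂ) - 1) * y) ^ Iᶜ.card
        * lwe q n (chr q n β) I α (x + ((q : ℂ) - 2) * y) (-y) * (x - y) ^ h := by
  have hx' : x + ((q : ℂ) - 2) * y + ((q : ℂ) - 1) * -y = x - y := by ring
  have hy' : x + ((q : ℂ) - 2) * y - -y = x + ((q : ℂ) - 1) * y := by ring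
  have hI := card_filter_add_card_filter_not (s := I) fun i => β i = 0
  have hIc := card_filter_add_card_filter_not (s := Iᶜ) fun i => β i = 0
  have hh : (I.filter fun i => β i ≠ 0).card + (Iᶜ.filter fun i => β i ≠ 0).card = h := by
    rw [← hβ, ← card_union_of_disjoint (disjoint_filter_filter disjoint_compl_right),
      ← filter_union, union_compl, supp]
  rw [lwe_chr, lwe_chr, hx', hy', ← hI, ← hIc, ← hh]
  simp only [ne_eq]
  ring

theorem IsEigenfun.lwe_duality {f : (Fin n → ZMod q) → ℂ} {h : ℕ}
    (hf : IsEigenfun q n f (((q : ℂ) - 1) * n - (q : ℂ) * h))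
    (α : Fin n → ZMod q) (I : Finset (Fin n)) (x y : ℂ) :
    (x - y) ^ I.card * lwe q n f Iᶜ α x y * (x + ((q : ℂ) - 1) * y) ^ h
      = (x + ((q : ℂ) - 1) * y) ^ Iᶜ.card * lwe q n f I α (x + ((q : ℂ) - 2) * y) (-y)
        * (x - y) ^ h := by
  refine mul_left_cancel₀ (pow_ne_zero n (Nat.cast_ne_zero.2 (NeZero.ne q))) ?_
  have hexpand : ∀ (A B : ℂ) (J : Finset (Fin n)) (x' y' : ℂ),
      (q : ℂ) ^ n * (A * lwe q n f J α x' y' * B)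
        = ∑ β, ftr q n f β * (A * lwe q n (chr q n β) J α x' y' * B) := fun A B J x' y' =>
    calc (q : ℂ) ^ n * (A * lwe q n f J α x' y' * B)
        = A * ((q : ℂ) ^ n * lwe q n f J α x' y') * B := by ring
      _ = _ := by
          rw [pow_mul_lwe_eq_sum_ftr_mul, mul_sum, sum_mul]
          exact sum_congr rfl fun β _ => by ring
  rw [hexpand, hexpand]
  refine sum_congr rfl fun β _ => ?_
  by_cases hβ : (supp q n β).card = h
  · rw [lwe_chr_duality hβ]
  · rw [hf.ftr_eq_zero fun hμ => hβ ?_, zero_mul, zero_mul]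
    have hq : (q : ℂ) ≠ 0 := Nat.cast_ne_zero.2 (NeZero.ne q)
    have hqh : (q : ℂ) * (supp q n β).card = q * h := by linear_combination hμ
    exact_mod_cast mul_left_cancel₀ hq hqh

lemma isEigenfun_of_adjM_mul_eq {m : Type*} [Fintype m] [DecidableEq m]
    {F : Matrix (Fin n → ZMod q) m ℂ} {μ : m → ℂ} (hF : adjM q n * F = F * diagonal μ)
    (j : m) : IsEigenfun q n (fun γ => F γ j) (μ j) := by
  intro α
  have hα := congrFun (congrFun hF α) j
  rw [mul_diagonal, mul_apply] at hα
  simp only [adjM, ite_mul, one_mul, zero_mul] at hα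
  rw [sum_filter, hα, mul_comm]

lemma colM_mul_apply {r : ℕ} {m : Type*} (c : (Fin n → ZMod q) → Fin r)
    (M : Matrix (Fin r) m ℂ) (γ : Fin n → ZMod q) (j : m) :
    (colM q n r c * M) γ j = M (c γ) j := by
  simp [colM, mul_apply, ite_mul]

lemma vecMul_lwe_indicator {r : ℕ} {m : Type*} (c : (Fin n → ZMod q) → Fin r)
    (M : Matrix (Fin r) m ℂ) (J : Finset (Fin n)) (α : Fin n → ZMod q) (x y : ℂ) :
    (fun i => lwe q n (fun β => if c β = i then (1 : ℂ) else 0) J α x y) ᵥ* M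
      = fun j => lwe q n (fun γ => M (c γ) j) J α x y := by
  funext j
  simp only [vecMul, dotProduct, lwe, sum_mul]
  rw [sum_comm]
  exact sum_congr rfl fun γ _ => by
    simp only [ite_mul, one_mul, zero_mul, sum_ite_eq, mem_univ, if_true]
    ring

end

-- The paper's identity multiplied by `(x+(q-1)y)^|Ī| (x'+(q-1)y')^|I|`, which clears the
-- negative exponents `h_i - k`.
theorem stmt_11_general (q n r : ℕ) [NeZero q]
    (c : (Fin n → ZMod q) → Fin r) (S T : Matrix (Fin r) (Fin r) ℂ)
    (μ : Fin r → ℂ) (hvec : Fin r → ℕ)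
    (hC : adjM q n * colM q n r c = colM q n r c * S)
    (hST : S * T = T * Matrix.diagonal μ)
    (hnum : ∀ i, hvec i ≤ n ∧ μ i = ((q : ℂ) - 1) * n - (q : ℂ) * hvec i)
    (α : Fin n → ZMod q) (I : Finset (Fin n)) (x y : ℂ) :
    ((x + ((q : ℂ) - 2) * y) + ((q : ℂ) - 1) * (-y)) ^ I.card •
      ((fun i => lwe q n (fun β => if c β = i then (1 : ℂ) else 0) Iᶜ α x y) ᵥ*
        (T * Matrix.diagonal (fun i => (x + ((q : ℂ) - 1) * y) ^ hvec i) * T⁻¹))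
    = (x + ((q : ℂ) - 1) * y) ^ Iᶜ.card •
        ((fun i => lwe q n (fun β => if c β = i then (1 : ℂ) else 0) I α
            (x + ((q : ℂ) - 2) * y) (-y)) ᵥ*
          (T * Matrix.diagonal
            (fun i => ((x + ((q : ℂ) - 2) * y) + ((q : ℂ) - 1) * (-y)) ^ hvec i) * T⁻¹)) := by
  have hcol : adjM q n * (colM q n r c * T) = colM q n r c * T * diagonal μ := by
    rw [← Matrix.mul_assoc, hC, Matrix.mul_assoc, hST, Matrix.mul_assoc]
  have heig : ∀ j, IsEigenfun q n (fun γ => T (c γ) j) (((q : ℂ) - 1) * n - (q : ℂ) * hvec j) :=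
    fun j => by
      simpa only [colM_mul_apply, (hnum j).2] using isEigenfun_of_adjM_mul_eq (q := q) hcol j
  have hx' : x + ((q : ℂ) - 2) * y + ((q : ℂ) - 1) * -y = x - y := by ring
  simp only [hx']
  rw [← vecMul_vecMul, ← vecMul_vecMul, vecMul_lwe_indicator, ← vecMul_vecMul, ← vecMul_vecMul,
    vecMul_lwe_indicator]
  simp only [← smul_vecMul]
  congr 1
  funext j
  simp only [vecMul_diagonal, Pi.smul_apply, smul_eq_mul]
  linear_combination (heig j).lwe_duality α I x y

/-- Theorem 2 (perfect colorings), with negative matrix exponents cleared: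
`g^{Ī,α}_C(x,y)·(x+(q-1)y)^{h(S)-|Ī|E} = g^{I,α}_C(x',y')·(x'+(q-1)y')^{h(S)-|I|E}`,
where matrix powers `t^{h(S)-kE} = T diag(t^{h_i-k}) T⁻¹`, multiplied through by
the scalars `(x+(q-1)y)^{|Ī|} (x'+(q-1)y')^{|I|}`. -/
theorem stmt_11 (q n r : ℕ) [NeZero q] (hq : 2 ≤ q)
    (c : (Fin n → ZMod q) → Fin r) (S T : Matrix (Fin r) (Fin r) ℂ)
    (μ : Fin r → ℂ) (hvec : Fin r → ℕ)
    (hC : adjM q n * colM q n r c = colM q n r c * S)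
    (hT : IsUnit T.det) (hST : S * T = T * Matrix.diagonal μ)
    (hnum : ∀ i, hvec i ≤ n ∧ μ i = ((q : ℂ) - 1) * n - (q : ℂ) * hvec i)
    (α : Fin n → ZMod q) (I : Finset (Fin n)) (x y : ℂ) :
    ((x + ((q : ℂ) - 2) * y) + ((q : ℂ) - 1) * (-y)) ^ I.card •
      ((fun i => lwe q n (fun β => if c β = i then (1 : ℂ) else 0) Iᶜ α x y) ᵥ*
        (T * Matrix.diagonal (fun i => (x + ((q : ℂ) - 1) * y) ^ hvec i) * T⁻¹))
    = (x + ((q : ℂ) - 1) * y) ^ Iᶜ.card •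
        ((fun i => lwe q n (fun β => if c β = i then (1 : ℂ) else 0) I α
            (x + ((q : ℂ) - 2) * y) (-y)) ᵥ*
          (T * Matrix.diagonal
            (fun i => ((x + ((q : ℂ) - 2) * y) + ((q : ℂ) - 1) * (-y)) ^ hvec i) * T⁻¹)) :=
  stmt_11_general q n r c S T μ hvec hC hST hnum α I x y
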